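/- Sharpness of the hitting-time amplification: for every integer M ≥ 1 and every ε > 0, there exists a deterministic stochastic shortest path problem, an initial state x, and a bounded function V with V(t) = 0 and ‖V − V*‖∞ ≤ ε, such that the rollout policy π_R built from V is proper from x, the hitting time satisfies E[τ] = M + 1, and J^{π_R}(x) − V*(x) ≥ (ε/4) · E[τ]. Concretely, one may take states {0, 1, …, M, t}, initial state 0; at each state i < M the control s moves to t with cost 0 and the control c moves to i+1 with cost ε/2; at state M the only control moves to t with cost 0; t is absorbing with zero cost; then V*(i) = 0 for all i, and with V(i) = −ε for i = 0,…,M and V(t) = 0, the rollout policy selects c at every i < M, is proper with τ = M + 1 deterministically, and J^{π_R}(0) = Mε/2 ≥ (ε/4)(M+1). -/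

import Mathlib

/-!
Chain `0 → 1 → ⋯ → M → t` where every state `i < M` may also stop (jump to `t`) for free, while
continuing costs `ε / 2`. Stopping at once is optimal, so `V* = 0`. The surrogate `V = -ε` off `t`
underestimates the value of the successor state `i + 1` by exactly `ε`, which outweighs the
continuation cost, so the greedy policy always continues and pays `M ε / 2 ≥ (ε / 4)(M + 1)`.
-/

open MeasureTheory ProbabilityTheory Filter
open scoped ENNReal

/-- Deterministic closed-loop trajectory: `x₀ = x`, `x_{k+1} = F(x_k, π(x_k))`. -/
def detTraj {X U : Type*} (F : X → U → X) (π : X → U) (x : X) : ℕ → X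
  | 0 => x
  | k + 1 => F (detTraj F π x k) (π (detTraj F π x k))

namespace ChainSSP

variable (M : ℕ) (ε : ℝ)

/-- `none` is the terminal state `t`; `some i` is the chain state `i`. -/
abbrev State := Option (Fin (M + 1))

/-- The control `true` continues along the chain (at `M` it stops as well), `false` stops. -/
def next : State M → Bool → State M
  | some i, true => if h : (i : ℕ) < M then some ⟨i + 1, by omega⟩ else none
  | _, _ => none

noncomputable def cost : State M → Bool → ℝ
  | some i, true => if (i : ℕ) < M then ε / 2 else 0
  | _, _ => 0

def surrogate : State M → ℝ
  | none => 0
  | some _ => -ε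

variable {M ε}

theorem cost_nonneg (hε : 0 ≤ ε) (y : State M) (u : Bool) : 0 ≤ cost M ε y u := by
  rcases y with _ | i <;> rcases u with _ | _ <;> simp only [cost] <;> positivity

theorem abs_surrogate_le (hε : 0 ≤ ε) (y : State M) : |surrogate M ε y| ≤ ε := by
  rcases y with _ | _ <;> simp [surrogate, abs_of_nonneg hε, hε]

theorem cost_add_surrogate_next_continue_le (hε : 0 ≤ ε) (i : Fin (M + 1)) (u : Bool) :
    cost M ε (some i) true + surrogate M ε (next M (some i) true) ≤
      cost M ε (some i) u + surrogate M ε (next M (some i) u) := by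
  rcases u with _ | _
  · by_cases hi : (i : ℕ) < M <;> simp [cost, next, surrogate, hi]; linarith
  · exact le_rfl

theorem iInf_cost_eq_zero (hε : 0 ≤ ε) (y : State M) :
    ⨅ u : (Set.univ : Set Bool), (cost M ε y u + 0) = 0 :=
  IsLeast.csInf_eq ⟨⟨⟨false, trivial⟩, by rcases y with _ | _ <;> simp [cost]⟩,
    by rintro _ ⟨u, rfl⟩; simpa using cost_nonneg hε y u⟩

theorem detTraj_continue_of_le {k : ℕ} (hk : k ≤ M) :
    detTraj (next M) (fun _ => true) (some 0) k = some ⟨k, by omega⟩ := by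
  induction k with
  | zero => rfl
  | succ k ih =>
    rw [detTraj, ih (by omega)]
    simp [next, show k < M by omega]

theorem detTraj_continue_succ :
    detTraj (next M) (fun _ => true) (some 0) (M + 1) = none := by
  rw [detTraj, detTraj_continue_of_le le_rfl]
  simp [next]

theorem sum_cost_detTraj_continue :
    ∑ k ∈ Finset.range (M + 1),
        cost M ε (detTraj (next M) (fun _ => true) (some 0) k) true = M * (ε / 2) := by
  have hcost : ∀ k ∈ Finset.range (M + 1),
      cost M ε (detTraj (next M) (fun _ => true) (some 0) k) true =
        if k < M then ε / 2 else 0 := by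
    intro k hk
    rw [detTraj_continue_of_le (Nat.lt_succ_iff.mp (Finset.mem_range.mp hk))]
    rfl
  rw [Finset.sum_congr rfl hcost, Finset.sum_range_succ, if_neg (lt_irrefl M), add_zero,
    Finset.sum_congr rfl fun k hk => if_pos (Finset.mem_range.mp hk)]
  simp

end ChainSSP

open ChainSSP in
/-- Sharpness of the hitting-time amplification: for every `M ≥ 1` and `ε > 0` there is a
deterministic SSP, an initial state `x`, and a surrogate `V` with `V(t) = 0` and
`‖V - V*‖∞ ≤ ε`, such that the rollout policy `π_R` built from `V` is proper from `x`, the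
hitting time is exactly `M + 1` (so `E[τ] = M + 1`), and
`J^{π_R}(x) - V*(x) ≥ (ε/4) · E[τ]`. -/
theorem rollout_hitting_time_amplification_sharp
    (M : ℕ) (hM : 1 ≤ M) (ε : ℝ) (hε : 0 < ε) :
    ∃ (X U : Type) (_ : Finite X) (_ : Finite U) (t : X) (Ua : X → Set U)
      (F : X → U → X) (f : X → U → ℝ) (Vstar V : X → ℝ) (πR : X → U) (x : X),
      (∀ y, (Ua y).Nonempty) ∧ (∀ y u, 0 ≤ f y u) ∧
      (∀ u, F t u = t) ∧ (∀ u, f t u = 0) ∧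
      -- V* : the optimal value, satisfying the deterministic Bellman equation
      Vstar t = 0 ∧
      (∀ y, y ≠ t → Vstar y = ⨅ u : Ua y, (f y (u : U) + Vstar (F y (u : U)))) ∧
      -- the value surrogate V
      V t = 0 ∧ (∀ y, |V y - Vstar y| ≤ ε) ∧
      -- π_R : a rollout (one-step greedy) policy for V
      (∀ y, πR y ∈ Ua y) ∧
      (∀ y, y ≠ t → ∀ u ∈ Ua y, f y (πR y) + V (F y (πR y)) ≤ f y u + V (F y u)) ∧
      -- the closed loop from x is proper with hitting time exactly M + 1
      detTraj F πR x (M + 1) = t ∧ (∀ k < M + 1, detTraj F πR x k ≠ t) ∧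
      -- suboptimality at least (ε/4) · E[τ]
      ε / 4 * (M + 1)
        ≤ (∑ k ∈ Finset.range (M + 1),
            f (detTraj F πR x k) (πR (detTraj F πR x k))) - Vstar x := by
  refine ⟨State M, Bool, inferInstance, inferInstance, none, fun _ => Set.univ, next M, cost M ε,
    fun _ => 0, surrogate M ε, fun _ => true, some 0, fun _ => ⟨true, trivial⟩,
    cost_nonneg hε.le, fun _ => rfl, fun _ => rfl, rfl,
    fun y _ => (iInf_cost_eq_zero hε.le y).symm, rfl,
    fun y => by simpa using abs_surrogate_le hε.le y, fun _ => trivial, ?_,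
    detTraj_continue_succ, fun k hk => by simp [detTraj_continue_of_le (Nat.lt_succ_iff.mp hk)],
    ?_⟩
  · rintro (_ | i) hy u -
    exacts [absurd rfl hy, cost_add_surrogate_next_continue_le hε.le i u]
  · rw [sum_cost_detTraj_continue, sub_zero]
    have hM' : (1 : ℝ) ≤ M := by exact_mod_cast hM
    nlinarith
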